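/- Let c > 0, h > 0. Then (1/12)·h³·(c + c²) · ∑_{k ≥ ⌈8/(ch)⌉} e^{2kh - c·e^{kh}} ≤ (e^{-4}(1+c)/3) · e^{-c/2} · h², provided ch ≤ 2. -/

import Mathlib

/-!
Past `x = 8 / c` the term `exp (2x - c eˣ)` is at most `exp (-(c/2) eˣ) ≤ exp (-(c/2)(1 + x))`.
Along `x = (k + n) h` this is a geometric series of ratio `exp (-ch/2)`; its first term is at most
`e^{-c/2} e^{-4}` because `ckh ≥ 8`, and `1 / (1 - e^{-ch/2}) ≤ 4 / (ch)` because `ch ≤ 2`.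
-/

open Real

lemma two_mul_sub_mul_exp_le {c x : ℝ} (hc : 0 < c) (hx : 8 ≤ c * x) :
    2 * x - c * exp x ≤ -(c / 2) * exp x := by
  have hx0 : 0 ≤ x := by nlinarith
  have hquad : x ^ 2 / 2 ≤ exp x := by nlinarith [quadratic_le_exp_of_nonneg hx0]
  nlinarith [mul_le_mul_of_nonneg_left hquad hc.le]

lemma exp_two_mul_sub_mul_exp_le {c x : ℝ} (hc : 0 < c) (hx : 8 ≤ c * x) :
    exp (2 * x - c * exp x) ≤ exp (-(c / 2) * (1 + x)) :=
  exp_le_exp.2 <| by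
    nlinarith [two_mul_sub_mul_exp_le hc hx, mul_le_mul_of_nonneg_left (add_one_le_exp x) hc.le]

lemma hasSum_exp_sub_nat_mul {t : ℝ} (ht : 0 < t) (y : ℝ) :
    HasSum (fun n : ℕ => exp (y - n * t)) (exp y * (1 - exp (-t))⁻¹) := by
  have hterm : (fun n : ℕ => exp (y - n * t)) = fun n => exp y * exp (-t) ^ n := by
    funext n
    rw [← exp_nat_mul, ← exp_add]
    ring_nf
  rw [hterm]
  exact (hasSum_geometric_of_lt_one (exp_nonneg _) (exp_lt_one_iff.2 (by linarith))).mul_left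
    (exp y)

lemma inv_one_sub_exp_neg_le {t : ℝ} (ht₀ : 0 < t) (ht₁ : t ≤ 1) :
    (1 - exp (-t))⁻¹ ≤ 2 / t := by
  have hexp : exp (-t) ≤ 1 - t / 2 := by
    calc exp (-t) = (exp t)⁻¹ := exp_neg t
      _ ≤ (1 + t)⁻¹ := inv_anti₀ (by positivity) (by linarith [add_one_le_exp t])
      _ ≤ 1 - t / 2 := by rw [inv_le_iff_one_le_mul₀ (by positivity)]; nlinarith
  calc (1 - exp (-t))⁻¹ ≤ (t / 2)⁻¹ := inv_anti₀ (by positivity) (by linarith)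
    _ = 2 / t := inv_div t 2

lemma tsum_exp_two_mul_sub_mul_exp_le {c h k : ℝ} (hc : 0 < c) (hh : 0 < h)
    (hk : 8 ≤ c * (k * h)) :
    ∑' n : ℕ, exp (2 * (k + n) * h - c * exp ((k + n) * h)) ≤
      exp (-(c / 2) * (1 + k * h)) * (1 - exp (-(c * h / 2)))⁻¹ := by
  have hgeom := hasSum_exp_sub_nat_mul (t := c * h / 2) (by positivity) (-(c / 2) * (1 + k * h))
  have hterm (n : ℕ) : exp (2 * (k + n) * h - c * exp ((k + n) * h)) ≤
      exp (-(c / 2) * (1 + k * h) - n * (c * h / 2)) := by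
    have hkn : 8 ≤ c * ((k + n) * h) := by
      have : 0 ≤ c * (n * h) := by positivity
      linarith
    convert exp_two_mul_sub_mul_exp_le hc hkn using 2 <;> ring
  calc ∑' n : ℕ, exp (2 * (k + n) * h - c * exp ((k + n) * h))
      ≤ ∑' n : ℕ, exp (-(c / 2) * (1 + k * h) - n * (c * h / 2)) :=
        Summable.tsum_le_tsum hterm
          (hgeom.summable.of_nonneg_of_le (fun _ => exp_nonneg _) hterm) hgeom.summable
    _ = _ := hgeom.tsum_eq

theorem case1_bound (c h : ℝ) (hc : 0 < c) (hh : 0 < h) (hch : c * h ≤ 2) :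
    (1 / 12) * h ^ 3 * (c + c ^ 2) *
      (∑' n : ℕ, Real.exp (2 * ((⌈8 / (c * h)⌉ : ℝ) + (n : ℝ)) * h -
        c * Real.exp (((⌈8 / (c * h)⌉ : ℝ) + (n : ℝ)) * h))) ≤
      (Real.exp (-4) * (1 + c) / 3) * Real.exp (-c / 2) * h ^ 2 := by
  set K : ℝ := (⌈8 / (c * h)⌉ : ℝ)
  have hK : 8 ≤ c * (K * h) := by
    have := (div_le_iff₀ (mul_pos hc hh)).1 (Int.le_ceil (8 / (c * h)))
    linarith
  have hfirst : exp (-(c / 2) * (1 + K * h)) ≤ exp (-c / 2) * exp (-4) := by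
    rw [← exp_add]
    exact exp_le_exp.2 (by linarith)
  have hratio := inv_one_sub_exp_neg_le (t := c * h / 2) (by positivity) (by linarith)
  have hsum := (tsum_exp_two_mul_sub_mul_exp_le hc hh hK).trans
    (mul_le_mul hfirst hratio (inv_nonneg.2 (sub_nonneg.2 (exp_le_one_iff.2 (neg_nonpos.2 (by positivity)))))
      (by positivity))
  calc (1 / 12) * h ^ 3 * (c + c ^ 2) *
        (∑' n : ℕ, exp (2 * (K + n) * h - c * exp ((K + n) * h)))
      ≤ (1 / 12) * h ^ 3 * (c + c ^ 2) * (exp (-c / 2) * exp (-4) * (2 / (c * h / 2))) := by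
        gcongr
    _ = (exp (-4) * (1 + c) / 3) * exp (-c / 2) * h ^ 2 := by
        field_simp
        ring
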